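/- arXiv:2410.03284 — 4 statements merged into one kernel-verified Lean document; each statement's English description precedes it below -/
import Mathlib

section
/- Let K ≥ 1, let x ∈ ℝ^K be a probability vector, and let i_t be an index with x_{i_t} ≥ 1/2. Define w̃_i = x_i² / (∑_k x_k²). Then (1 - w̃_{i_t})² + w̃_{i_t} · ∑_{i ≠ i_t} w̃_i ≤ 5(1 - x_{i_t})². -/
theorem stmt_6 (K : ℕ) (hK : 1 ≤ K) (x : Fin K → ℝ)
    (hx : ∀ i, 0 ≤ x i) (hsum : ∑ i, x i = 1) (it : Fin K)
    (hit : 1/2 ≤ x it)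
    (w : Fin K → ℝ) (hw : ∀ i, w i = (x i) ^ 2 / ∑ k, (x k) ^ 2) :
    (1 - w it) ^ 2 + w it * ∑ i ∈ Finset.univ.erase it, w i
      ≤ 5 * (1 - x it) ^ 2 := by
  set S := ∑ k, x k ^ 2 with hS
  have hSge : x it ^ 2 ≤ S :=
    Finset.single_le_sum (fun i _ => sq_nonneg (x i)) (Finset.mem_univ it)
  have hSpos : 0 < S := lt_of_lt_of_le (by nlinarith) hSge
  have hwsum : ∑ i, w i = 1 := by
    simp only [hw, ← Finset.sum_div]
    exact div_self hSpos.ne'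
  have herase : ∑ i ∈ Finset.univ.erase it, w i = 1 - w it := by
    have := Finset.add_sum_erase Finset.univ w (Finset.mem_univ it)
    linarith [this, hwsum]
  have hrest : S - x it ^ 2 = ∑ i ∈ Finset.univ.erase it, x i ^ 2 := by
    have := Finset.add_sum_erase Finset.univ (fun i => x i ^ 2) (Finset.mem_univ it)
    simp only [hS]; linarith
  have hrestsum : ∑ i ∈ Finset.univ.erase it, x i = 1 - x it := by
    have := Finset.add_sum_erase Finset.univ x (Finset.mem_univ it)
    linarith [this, hsum]
  have hsq : ∑ i ∈ Finset.univ.erase it, x i ^ 2 ≤ (∑ i ∈ Finset.univ.erase it, x i) ^ 2 :=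
    Finset.sum_sq_le_sq_sum_of_nonneg (fun i _ => hx i)
  have hwit : w it = x it ^ 2 / S := hw it
  rw [herase, hwit]
  rw [hrestsum] at hsq
  have hkey : S - x it ^ 2 ≤ (1 - x it) ^ 2 := hrest ▸ hsq
  have h1 : (S - x it ^ 2) / S ≤ 4 * (1 - x it) ^ 2 := by
    rw [div_le_iff₀ hSpos]
    nlinarith [mul_nonneg (sq_nonneg (1 - x it)) (by nlinarith : (0:ℝ) ≤ 4 * S - 1)]
  have heq : 1 - x it ^ 2 / S = (S - x it ^ 2) / S := by field_simp
  have h2 : 0 ≤ x it ^ 2 / S := div_nonneg (sq_nonneg _) hSpos.le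
  have h3 : x it ^ 2 / S ≤ 1 := (div_le_one hSpos).mpr hSge
  have hring : (1 - x it ^ 2 / S) ^ 2 + x it ^ 2 / S * (1 - x it ^ 2 / S)
      = 1 - x it ^ 2 / S := by ring
  rw [hring, heq]
  nlinarith [sq_nonneg (1 - x it)]
end

section
/- Suppose S ≥ 4 is a real number satisfying S² ≤ 4 + (1/(K log T)) · ∑_{t=1}^T b_t² with 0 ≤ b_t ≤ S and 0 ≤ b_t ≤ a_t for reals a_t ≥ 0, where K log T ≥ 1. Then S^α ≤ (4/3)·(1/(K log T))·∑_{t=1}^T a_t^α for any α ∈ (1, 2]. -/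
/-! Write `B = ∑ b_t²` and `A = ∑ a_t^α`. Termwise, `b² = b^(2-α) b^α ≤ S^(2-α) a^α`, so
`B ≤ S^(2-α) A`. Since `S ≥ 4` gives `4 ≤ S²/4`, the hypothesis yields `(3/4) S² ≤ B / (K log T)`,
and dividing `S² = S^α S^(2-α)` by `S^(2-α)` gives the claim. -/

lemma sq_le_rpow_mul_rpow {x y S α : ℝ} (hx : 0 ≤ x) (hxS : x ≤ S) (hxy : x ≤ y)
    (hα0 : 0 ≤ α) (hα2 : α ≤ 2) : x ^ 2 ≤ S ^ (2 - α) * y ^ α := by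
  have hsplit : x ^ 2 = x ^ (2 - α) * x ^ α := by
    rw [← Real.rpow_add' hx (by norm_num), sub_add_cancel, Real.rpow_two]
  rw [hsplit]
  exact mul_le_mul (Real.rpow_le_rpow hx hxS (by linarith)) (Real.rpow_le_rpow hx hxy hα0)
    (by positivity) (Real.rpow_nonneg (hx.trans hxS) _)

lemma sum_sq_le_rpow_mul_sum_rpow {ι : Type*} (s : Finset ι) {a b : ι → ℝ} {S α : ℝ}
    (hb0 : ∀ t, 0 ≤ b t) (hbS : ∀ t, b t ≤ S) (hba : ∀ t, b t ≤ a t)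
    (hα0 : 0 ≤ α) (hα2 : α ≤ 2) :
    ∑ t ∈ s, b t ^ 2 ≤ S ^ (2 - α) * ∑ t ∈ s, a t ^ α := by
  rw [Finset.mul_sum]
  exact Finset.sum_le_sum fun t _ => sq_le_rpow_mul_rpow (hb0 t) (hbS t) (hba t) hα0 hα2

lemma rpow_le_of_sq_le_four_add {S c A B α : ℝ} (hS : 4 ≤ S) (hB0 : 0 ≤ B)
    (hBA : B ≤ S ^ (2 - α) * A) (hSsq : S ^ 2 ≤ 4 + c * B) :
    S ^ α ≤ 4 / 3 * c * A := by
  have hS0 : 0 < S := by linarith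
  have hcB : 3 / 4 * S ^ 2 ≤ c * B := by nlinarith
  -- `c * B ≥ 12` forces `c > 0`, so multiplying `hBA` by `c` is legitimate.
  have hc : 0 < c := pos_of_mul_pos_left (by nlinarith) hB0
  have hsplit : S ^ 2 = S ^ α * S ^ (2 - α) := by
    rw [← Real.rpow_add hS0, add_sub_cancel, Real.rpow_two]
  have hcancel : S ^ α * S ^ (2 - α) ≤ 4 / 3 * c * A * S ^ (2 - α) := by
    nlinarith [mul_le_mul_of_nonneg_left hBA hc.le]
  exact le_of_mul_le_mul_right hcancel (Real.rpow_pos_of_pos hS0 _)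

theorem stmt_9_general (S : ℝ) (hS : 4 ≤ S) (K T : ℕ)
    (a b : ℕ → ℝ)
    (hb0 : ∀ t, 0 ≤ b t) (hbS : ∀ t, b t ≤ S) (hba : ∀ t, b t ≤ a t)
    (hSsq : S ^ 2 ≤ 4 + (1 / ((K : ℝ) * Real.log T)) * ∑ t ∈ Finset.Icc 1 T, b t ^ 2)
    (α : ℝ) (hα1 : 1 < α) (hα2 : α ≤ 2) :
    S ^ α ≤ (4/3) * (1 / ((K : ℝ) * Real.log T)) * ∑ t ∈ Finset.Icc 1 T, a t ^ α :=
  rpow_le_of_sq_le_four_add hS (Finset.sum_nonneg fun t _ => sq_nonneg (b t))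
    (sum_sq_le_rpow_mul_sum_rpow _ hb0 hbS hba (by linarith) hα2) hSsq

theorem stmt_9 (S : ℝ) (hS : 4 ≤ S) (K T : ℕ) (hKT : 1 ≤ (K : ℝ) * Real.log T)
    (a b : ℕ → ℝ) (ha0 : ∀ t, 0 ≤ a t)
    (hb0 : ∀ t, 0 ≤ b t) (hbS : ∀ t, b t ≤ S) (hba : ∀ t, b t ≤ a t)
    (hSsq : S ^ 2 ≤ 4 + (1 / ((K : ℝ) * Real.log T)) * ∑ t ∈ Finset.Icc 1 T, b t ^ 2)
    (α : ℝ) (hα1 : 1 < α) (hα2 : α ≤ 2) :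
    S ^ α ≤ (4/3) * (1 / ((K : ℝ) * Real.log T)) * ∑ t ∈ Finset.Icc 1 T, a t ^ α :=
  stmt_9_general S hS K T a b hb0 hbS hba hSsq α hα1 hα2
end

section
/- Fix S > 0, a positive integer K ≥ 2, reals L_1,...,L_K, and λ < min_i L_i with ∑_i S/(L_i - λ) = 1 (write x_i = S/(L_i - λ)). Suppose the j-th coordinate is perturbed: L'_i = L_i + δ·1{i=j} with 0 < δ ≤ S/(4 x_j (1 - x_j)) when x_j < 1, and let λ' be the unique multiplier with z_i = S/(L'_i - λ') summing to 1. Then z_i ≤ 2 x_i for all i ∈ {1,...,K}. -/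
theorem stmt_15 (S : ℝ) (hS : 0 < S) (K : ℕ) (hK : 2 ≤ K)
    (L : Fin K → ℝ) (lam lam' δ : ℝ) (j : Fin K)
    (x z : Fin K → ℝ)
    (hxdef : ∀ i, x i = S / (L i - lam))
    (hlam : ∀ i, lam < L i)
    (hxsum : ∑ i, x i = 1)
    (hδpos : 0 < δ)
    (hxj : x j < 1)
    (hδle : δ ≤ S / (4 * x j * (1 - x j)))
    (hzdef : ∀ i, z i = S / ((L i + (if i = j then δ else 0)) - lam'))
    (hlam' : ∀ i, lam' < L i + (if i = j then δ else 0))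
    (hzsum : ∑ i, z i = 1) :
    ∀ i, z i ≤ 2 * x i := by
  haveI : Nonempty (Fin K) := ⟨⟨0, by omega⟩⟩
  have hden : ∀ i, 0 < L i - lam := fun i => sub_pos.2 (hlam i)
  have hden' : ∀ i, 0 < L i + (if i = j then δ else 0) - lam' :=
    fun i => sub_pos.2 (hlam' i)
  have hx_pos : ∀ i, 0 < x i := fun i => (hxdef i) ▸ div_pos hS (hden i)
  have hz_pos : ∀ i, 0 < z i := fun i => (hzdef i) ▸ div_pos hS (hden' i)
  -- Step A : lam ≤ lam'
  have hA : lam ≤ lam' := by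
    by_contra hcon
    push_neg at hcon
    have hlt : ∀ k, z k < x k := by
      intro k
      rw [hzdef, hxdef]
      apply div_lt_div_of_pos_left hS (hden k)
      by_cases hk : k = j <;> simp [hk] <;> linarith
    have : ∑ k, z k < ∑ k, x k :=
      Finset.sum_lt_sum_of_nonempty Finset.univ_nonempty (fun k _ => hlt k)
    linarith
  -- Step B : lam' ≤ lam + δ
  have hB : lam' ≤ lam + δ := by
    by_contra hcon
    push_neg at hcon
    have hlt : ∀ k, x k < z k := by
      intro k
      rw [hzdef, hxdef]
      apply div_lt_div_of_pos_left hS (hden' k)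
      by_cases hk : k = j <;> simp [hk] <;> linarith
    have : ∑ k, x k < ∑ k, z k :=
      Finset.sum_lt_sum_of_nonempty Finset.univ_nonempty (fun k _ => hlt k)
    linarith
  -- Step C : for k ≠ j, x k ≤ z k
  have hC : ∀ k, k ≠ j → x k ≤ z k := by
    intro k hk
    have h1 : 0 < L k - lam' := by
      have := hden' k; simp [hk] at this; linarith
    rw [hzdef, hxdef]
    simp only [hk, if_false, add_zero]
    apply div_le_div_of_nonneg_left hS.le h1
    linarith
  -- Step D : z j ≤ x j
  have hD : z j ≤ x j := by
    rw [hzdef, hxdef]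
    simp only [eq_self_iff_true, if_true]
    apply div_le_div_of_nonneg_left hS.le (hden j)
    linarith
  intro i
  by_cases hij : i = j
  · subst hij
    have := hx_pos i
    linarith
  · by_contra hcon
    push_neg at hcon
    -- sum comparison: z i - x i ≤ x j - z j
    have hsum0 : ∑ k, (z k - x k) = 0 := by
      rw [Finset.sum_sub_distrib, hzsum, hxsum]; ring
    have hsplit : (z j - x j) + ∑ k ∈ Finset.univ.erase j, (z k - x k) = 0 := by
      have h := Finset.add_sum_erase Finset.univ (fun k => z k - x k) (Finset.mem_univ j)
      rw [h]
      exact hsum0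
    have hile : z i - x i ≤ ∑ k ∈ Finset.univ.erase j, (z k - x k) :=
      Finset.single_le_sum
        (fun k hk => sub_nonneg.2 (hC k (Finset.ne_of_mem_erase hk)))
        (Finset.mem_erase.2 ⟨hij, Finset.mem_univ i⟩)
    have hmass : z i - x i ≤ x j - z j := by linarith
    have hxi_lt_xj : x i < x j := by
      have := hz_pos j
      linarith
    -- from z i > 2 x i : lam' - lam > (L i - lam)/2
    have hz_i : z i = S / (L i - lam') := by
      rw [hzdef]; simp [hij]
    have hkey : 2 * (L i - lam') < L i - lam := by
      have hc : 2 * S / (L i - lam) < S / (L i - lam') := by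
        rw [hxdef, hz_i] at hcon
        rw [mul_div_assoc]
        exact hcon
      have hden'i : 0 < L i - lam' := by
        have := hden' i; simp [hij] at this; linarith
      have := (div_lt_div_iff₀ (hden i) hden'i).mp hc
      nlinarith
    -- combine with δ bound
    have hxj_pos := hx_pos j
    have hxj1 : 0 < 1 - x j := by linarith
    have h4 : 0 < 4 * x j * (1 - x j) := by positivity
    have hδ2 : lam' - lam ≤ S / (4 * x j * (1 - x j)) := le_trans (by linarith) hδle
    have hgap : (L i - lam) / 2 < lam' - lam := by linarith
    have hratio : (L i - lam) / 2 < S / (4 * x j * (1 - x j)) := lt_of_lt_of_le hgap hδ2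
    have hxa : x i * (L i - lam) = S := by
      rw [hxdef]; exact div_mul_cancel₀ S (hden i).ne'
    -- x i + x j ≤ 1
    have hxixj : x i + x j ≤ 1 := by
      have hsub : ({i, j} : Finset (Fin K)) ⊆ Finset.univ := Finset.subset_univ _
      have := Finset.sum_le_sum_of_subset_of_nonneg hsub
        (fun k _ _ => (hx_pos k).le)
      rw [Finset.sum_pair hij, hxsum] at this
      exact this
    -- derive 2 x j (1 - x j) < x i
    have hcross : (L i - lam) * (4 * x j * (1 - x j)) < S * 2 :=
      (div_lt_div_iff₀ two_pos h4).mp hratio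
    have h2p : 2 * x j * (1 - x j) < x i := by
      have hai := hden i
      nlinarith [hx_pos i]
    nlinarith [hxj1, hxj_pos]
end

section
/- Fix S > 0, K ≥ 2, reals L_1,...,L_K, λ < min_i L_i with x_i = S/(L_i - λ) summing to 1. Perturb coordinate j by 0 < δ ≤ S/(4 x_j (1 - x_j)) and let z_i = S/(L'_i - λ') be the updated probability vector. Then z_i ≥ x_i / 2 for all i ∈ {1,...,K}. -/
/-!
Put `t = λ' - λ`. Comparing the KKT systems coordinatewise shows `0 ≤ t ≤ δ`: raising every
loss raises the multiplier, and raising all losses by `δ` raises it by exactly `δ`. From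
`x = S / (L - λ)` and `z = S / (L' - λ')` one gets `(z_i - x_i) S = (t - δ_i) x_i z_i`. At
`i = j` this gives `(x_j - z_j) S ≤ δ x_j z_j`, which suffices when `x_j ≤ 3/4`; summing it over
`i ≠ j` gives `(x_j - z_j) S = t ∑_{i ≠ j} x_i z_i ≤ δ (1 - x_j)`, which suffices when `x_j ≥ 3/4`.
All other coordinates only grow.
-/

open Finset

theorem barrier_sub_mul_eq {S a b lam lam' x z : ℝ} (ha : lam < a) (hb : lam' < b)
    (hx : x = S / (a - lam)) (hz : z = S / (b - lam')) :
    (z - x) * S = (lam' - lam - (b - a)) * (x * z) := by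
  have ha' : a - lam ≠ 0 := (sub_pos.2 ha).ne'
  have hb' : b - lam' ≠ 0 := (sub_pos.2 hb).ne'
  subst hx hz
  field_simp
  ring

theorem half_le_of_gap_le {S δ t x z : ℝ} (hS : 0 < S) (hx : 0 < x) (hz : 0 < z)
    (hδ : 0 < δ) (ht : 0 ≤ t) (htδ : t ≤ δ) (hδle : δ ≤ S / (4 * x * (1 - x)))
    (h_diag : (x - z) * S ≤ (δ - t) * (x * z)) (h_off : (x - z) * S ≤ t * (1 - x)) :
    x / 2 ≤ z := by
  have hden : 0 < 4 * x * (1 - x) := (div_pos_iff_of_pos_left hS).1 (hδ.trans_le hδle)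
  have hx1 : x < 1 := by nlinarith
  rw [le_div_iff₀ hden] at hδle
  rcases le_total x (3 / 4) with hx34 | hx34
  · have h_diag' : (x - z) * S ≤ δ * (x * z) :=
      h_diag.trans (mul_le_mul_of_nonneg_right (by linarith) (mul_pos hx hz).le)
    have hδx : δ * x ≤ S := by nlinarith
    have : (x - z) * S ≤ z * S := by nlinarith [mul_le_mul_of_nonneg_right hδx hz.le]
    linarith [le_of_mul_le_mul_right this hS]
  · have h_off' : (x - z) * S ≤ δ * (1 - x) :=
      h_off.trans (mul_le_mul_of_nonneg_right htδ (by linarith))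
    have : (x - z) * (4 * x) * S ≤ 1 * S := by nlinarith
    have := le_of_mul_le_mul_right this hS
    nlinarith

section LogBarrier

variable {ι : Type*} [Fintype ι] {S lam lam' : ℝ} {a b x z : ι → ℝ}

theorem multiplier_le_of_le [Nonempty ι] (hS : 0 < S) (ha : ∀ i, lam < a i)
    (hab : ∀ i, a i ≤ b i) (hx : ∀ i, x i = S / (a i - lam)) (hz : ∀ i, z i = S / (b i - lam'))
    (hsum : ∑ i, z i = ∑ i, x i) : lam ≤ lam' := by
  by_contra! h
  have hlt : ∀ i ∈ univ, z i < x i := fun i _ => by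
    rw [hx, hz]
    exact div_lt_div_of_pos_left hS (sub_pos.2 (ha i)) (by linarith [hab i])
  exact (sum_lt_sum_of_nonempty univ_nonempty hlt).ne hsum

theorem sub_mul_eq_mul_sum_erase [DecidableEq ι] (t : ℝ) {j : ι}
    (hsum : ∑ i, z i = ∑ i, x i) (h : ∀ i ≠ j, (z i - x i) * S = t * (x i * z i)) :
    (x j - z j) * S = t * ∑ i ∈ univ.erase j, x i * z i := by
  have hdiff : x j - z j = ∑ i ∈ univ.erase j, (z i - x i) := by
    rw [sum_erase_eq_sub (mem_univ j), sum_sub_distrib, hsum]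
    ring
  rw [hdiff, sum_mul, mul_sum]
  exact sum_congr rfl fun i hi => h i (ne_of_mem_erase hi)

theorem sum_erase_mul_le [DecidableEq ι] (hx : ∀ i, 0 ≤ x i) (hz : ∀ i, z i ≤ 1)
    (hsum : ∑ i, x i = 1) (j : ι) : ∑ i ∈ univ.erase j, x i * z i ≤ 1 - x j :=
  calc ∑ i ∈ univ.erase j, x i * z i ≤ ∑ i ∈ univ.erase j, x i :=
        sum_le_sum fun i _ => mul_le_of_le_one_right (hx i) (hz i)
    _ = 1 - x j := by rw [sum_erase_eq_sub (mem_univ j), hsum]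

theorem sub_mul_le_mul_one_sub [DecidableEq ι] {t : ℝ} {j : ι} (hx : ∀ i, 0 ≤ x i)
    (hz : ∀ i, 0 ≤ z i) (hxsum : ∑ i, x i = 1) (hzsum : ∑ i, z i = 1) (ht : 0 ≤ t)
    (h : ∀ i ≠ j, (z i - x i) * S = t * (x i * z i)) : (x j - z j) * S ≤ t * (1 - x j) := by
  have hz1 : ∀ i, z i ≤ 1 := fun i => hzsum ▸ single_le_sum (fun k _ => hz k) (mem_univ i)
  rw [sub_mul_eq_mul_sum_erase t (hzsum.trans hxsum.symm) h]
  exact mul_le_mul_of_nonneg_left (sum_erase_mul_le hx hz1 hxsum j) ht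

end LogBarrier

theorem stmt_16_general (S : ℝ) (hS : 0 < S) (K : ℕ)
    (L : Fin K → ℝ) (lam lam' δ : ℝ) (j : Fin K)
    (x z : Fin K → ℝ)
    (hxdef : ∀ i, x i = S / (L i - lam))
    (hlam : ∀ i, lam < L i)
    (hxsum : ∑ i, x i = 1)
    (hδpos : 0 < δ)
    (hδle : δ ≤ S / (4 * x j * (1 - x j)))
    (hzdef : ∀ i, z i = S / ((L i + (if i = j then δ else 0)) - lam'))
    (hlam' : ∀ i, lam' < L i + (if i = j then δ else 0))
    (hzsum : ∑ i, z i = 1) :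
    ∀ i, x i / 2 ≤ z i := by
  have : Nonempty (Fin K) := ⟨j⟩
  have hxpos : ∀ i, 0 < x i := fun i => hxdef i ▸ div_pos hS (sub_pos.2 (hlam i))
  have hzpos : ∀ i, 0 < z i := fun i => hzdef i ▸ div_pos hS (sub_pos.2 (hlam' i))
  have hsum : ∑ i, z i = ∑ i, x i := hzsum.trans hxsum.symm
  have hgap : ∀ i, (z i - x i) * S = (lam' - lam - (if i = j then δ else 0)) * (x i * z i) :=
    fun i => by simpa using barrier_sub_mul_eq (hlam i) (hlam' i) (hxdef i) (hzdef i)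
  have ht : lam ≤ lam' := multiplier_le_of_le hS hlam
    (fun i => le_add_of_nonneg_right (by split_ifs <;> positivity)) hxdef hzdef hsum
  have htδ : lam' ≤ lam + δ := multiplier_le_of_le (b := fun i => L i + δ) hS hlam'
    (fun i => by split_ifs <;> linarith) hzdef
    (fun i => by rw [hxdef, add_sub_add_right_eq_sub]) hsum.symm
  intro i
  by_cases hij : i = j
  · subst hij
    have h_off := sub_mul_le_mul_one_sub (S := S) (fun k => (hxpos k).le) (fun k => (hzpos k).le)
      hxsum hzsum (sub_nonneg.2 ht) fun k hk => by rw [hgap k, if_neg hk, sub_zero]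
    have h_diag : (x i - z i) * S = (δ - (lam' - lam)) * (x i * z i) := by
      linarith [if_pos rfl ▸ hgap i]
    exact half_le_of_gap_le hS (hxpos i) (hzpos i) hδpos (sub_nonneg.2 ht) (by linarith)
      hδle h_diag.le h_off
  · have hgrow : 0 ≤ (z i - x i) * S := by
      rw [hgap i, if_neg hij, sub_zero]
      exact mul_nonneg (sub_nonneg.2 ht) (mul_pos (hxpos i) (hzpos i)).le
    linarith [hxpos i, (mul_nonneg_iff_of_pos_right hS).1 hgrow]

theorem stmt_16 (S : ℝ) (hS : 0 < S) (K : ℕ) (hK : 2 ≤ K)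
    (L : Fin K → ℝ) (lam lam' δ : ℝ) (j : Fin K)
    (x z : Fin K → ℝ)
    (hxdef : ∀ i, x i = S / (L i - lam))
    (hlam : ∀ i, lam < L i)
    (hxsum : ∑ i, x i = 1)
    (hδpos : 0 < δ)
    (hxj : x j < 1)
    (hδle : δ ≤ S / (4 * x j * (1 - x j)))
    (hzdef : ∀ i, z i = S / ((L i + (if i = j then δ else 0)) - lam'))
    (hlam' : ∀ i, lam' < L i + (if i = j then δ else 0))
    (hzsum : ∑ i, z i = 1) :
    ∀ i, x i / 2 ≤ z i :=
  stmt_16_general S hS K L lam lam' δ j x z hxdef hlam hxsum hδpos hδle hzdef hlam' hzsum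
end
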